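/- arXiv:1412.6822 — 4 statements merged into one kernel-verified Lean document; each statement's English description precedes it below -/
import Mathlib

section
/- The complexity function of η satisfies ℂ(1) = 4, ℂ(2) = 6, ℂ(3) = 8, and for every n ≥ 2 and every k with 0 ≤ k < 2ⁿ, writing L = 2ⁿ + k: ℂ(L) = 2ⁿ⁺¹ + 2ⁿ⁻¹ + 3k if 0 ≤ k < 2ⁿ⁻¹, and ℂ(L) = 2ⁿ⁺¹ + 2ⁿ + 2k if 2ⁿ⁻¹ ≤ k < 2ⁿ. In particular, ℂ(L+1) − ℂ(L) equals 3 for 0 ≤ k < 2ⁿ⁻¹ and equals 2 for 2ⁿ⁻¹ ≤ k < 2ⁿ. -/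
/-! The letters of `η` alternate: `η(2i) = a` and `η(2i+1) = ξ(i)`, where `ξ(2i) = x` and
`ξ(2i+1) = ρ(ξ(i))` for the rotation `ρ : x ↦ y ↦ z ↦ x` (this is what `τ(a) = axa`
produces). So both `η` and `ξ` interleave a constant sequence with an injective image of `ξ`,
and a factor of length `L` starting at an even (resp. odd) position is the same as a factor of
`ξ` of length `⌊L/2⌋` (resp. `⌈L/2⌉`). As soon as no factor occurs at both parities (for `η`
when `L ≥ 1`, since `ξ` avoids `a`; for `ξ` when `L ≥ 3`, since `zz` is not a factor of `ξ`)
this gives `p(L) = p_ξ(⌊L/2⌋) + p_ξ(⌈L/2⌉)`. Starting from `p_ξ(1) = 3` and `p_ξ(2) = 5` (only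
`xx` occurs at both parities), induction over dyadic blocks shows that `p_ξ` is piecewise
linear with slopes `3` and `2`, and the formula for `η` follows. -/

/-- The four-letter alphabet `A = {a, x, y, z}`. -/
inductive A : Type
  | a | x | y | z
  deriving DecidableEq, Repr

/-- The substitution `τ : a ↦ axa, x ↦ y, y ↦ z, z ↦ x`. -/
def tau : A → List A
  | A.a => [A.a, A.x, A.a]
  | A.x => [A.y]
  | A.y => [A.z]
  | A.z => [A.x]

/-- The substitution `τ` extended to finite words by concatenation. -/
def tauW (w : List A) : List A := w.flatMap tau

/-- `pw n = τⁿ(a)`, a word of length `2^(n+1) - 1`. -/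
def pw : ℕ → List A
  | 0 => [A.a]
  | n + 1 => tauW (pw n)

/-- The fixed point `η` of `τ`: the unique one-sided infinite word having every
`τⁿ(a)` as a prefix.  (Since `pw (n+1)` has length `2^(n+2) - 1 > n`, reading its
`n`-th letter is well defined and independent of the choice of a large enough iterate.) -/
def eta (n : ℕ) : A := (pw (n + 1)).getD n A.a

/-- `w` is a (finite) factor of `η`. -/
def IsFactorEta (w : List A) : Prop :=
  ∃ i : ℕ, w = (List.range w.length).map (fun k => eta (i + k))

/-- The complexity function of `η`: the number of distinct factors of `η` of length `L`. -/
noncomputable def etaComplexity (L : ℕ) : ℕ :=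
  {w : List A | w.length = L ∧ IsFactorEta w}.ncard

section Factors

variable {α β ι : Type*}

def factor (g : ℕ → α) (i L : ℕ) : List α := (List.range L).map fun k => g (i + k)

def factors (g : ℕ → α) (L : ℕ) : Set (List α) := Set.range fun i => factor g i L

noncomputable def complexity (g : ℕ → α) (L : ℕ) : ℕ := (factors g L).ncard

lemma factor_eq_factor_iff {g : ℕ → α} {i j L : ℕ} :
    factor g i L = factor g j L ↔ ∀ k < L, g (i + k) = g (j + k) := by
  simp [factor, List.map_inj_left]

lemma factors_finite [Finite α] (g : ℕ → α) (L : ℕ) : (factors g L).Finite :=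
  (List.finite_length_eq α L).subset <| by rintro _ ⟨i, rfl⟩; simp [factor]

lemma ncard_range_eq_of_eq_iff {u : ι → α} {v : ι → β}
    (huv : ∀ i j, u i = u j ↔ v i = v j) :
    (Set.range u).ncard = (Set.range v).ncard :=
  Set.ncard_congr' <| (Setoid.quotientKerEquivRange u).symm.trans <|
    (Quotient.congrRight huv).trans (Setoid.quotientKerEquivRange v)

lemma complexity_zero (g : ℕ → α) : complexity g 0 = 1 := by
  have : factors g 0 = {[]} := by ext w; simp [factors, factor]
  rw [complexity, this, Set.ncard_singleton]

lemma complexity_one (g : ℕ → α) : complexity g 1 = (Set.range g).ncard :=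
  ncard_range_eq_of_eq_iff fun i j => by simp [factor]

end Factors

section Interleave

variable {α β : Type*} {g : ℕ → α} {L : ℕ}

def evenFactors (g : ℕ → α) (L : ℕ) : Set (List α) := Set.range fun i => factor g (2 * i) L

def oddFactors (g : ℕ → α) (L : ℕ) : Set (List α) :=
  Set.range fun i => factor g (2 * i + 1) L

lemma factors_eq_evenFactors_union_oddFactors :
    factors g L = evenFactors g L ∪ oddFactors g L := by
  ext w
  constructor
  · rintro ⟨i, rfl⟩
    obtain ⟨j, rfl | rfl⟩ := Nat.even_or_odd' i
    · exact Or.inl ⟨j, rfl⟩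
    · exact Or.inr ⟨j, rfl⟩
  · rintro (⟨j, rfl⟩ | ⟨j, rfl⟩) <;> exact ⟨_, rfl⟩

lemma disjoint_evenFactors_oddFactors_of_ne (hL : 0 < L)
    (hne : ∀ i j, g (2 * i) ≠ g (2 * j + 1)) :
    Disjoint (evenFactors g L) (oddFactors g L) := by
  rw [Set.disjoint_left]
  rintro _ ⟨i, rfl⟩ ⟨j, hj⟩
  exact hne i j (factor_eq_factor_iff.mp hj.symm 0 hL)

variable {h : ℕ → β} {c : α} {φ : β → α}

lemma factor_two_mul_eq_iff (hφ : φ.Injective) (heven : ∀ i, g (2 * i) = c)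
    (hodd : ∀ i, g (2 * i + 1) = φ (h i)) {i j : ℕ} :
    factor g (2 * i) L = factor g (2 * j) L ↔ factor h i (L / 2) = factor h j (L / 2) := by
  simp only [factor_eq_factor_iff]
  constructor
  · intro hg t ht
    apply hφ
    have := hg (2 * t + 1) (by omega)
    rwa [show 2 * i + (2 * t + 1) = 2 * (i + t) + 1 by ring,
      show 2 * j + (2 * t + 1) = 2 * (j + t) + 1 by ring, hodd, hodd] at this
  · intro hh k hk
    obtain ⟨t, rfl | rfl⟩ := Nat.even_or_odd' k
    · rw [← mul_add, ← mul_add, heven, heven]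
    · rw [show 2 * i + (2 * t + 1) = 2 * (i + t) + 1 by ring,
        show 2 * j + (2 * t + 1) = 2 * (j + t) + 1 by ring, hodd, hodd, hh t (by omega)]

lemma factor_two_mul_add_one_eq_iff (hφ : φ.Injective) (heven : ∀ i, g (2 * i) = c)
    (hodd : ∀ i, g (2 * i + 1) = φ (h i)) {i j : ℕ} :
    factor g (2 * i + 1) L = factor g (2 * j + 1) L ↔
      factor h i ((L + 1) / 2) = factor h j ((L + 1) / 2) := by
  simp only [factor_eq_factor_iff]
  constructor
  · intro hg t ht
    apply hφ
    have := hg (2 * t) (by omega)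
    rwa [show 2 * i + 1 + 2 * t = 2 * (i + t) + 1 by ring,
      show 2 * j + 1 + 2 * t = 2 * (j + t) + 1 by ring, hodd, hodd] at this
  · intro hh k hk
    obtain ⟨t, rfl | rfl⟩ := Nat.even_or_odd' k
    · rw [show 2 * i + 1 + 2 * t = 2 * (i + t) + 1 by ring,
        show 2 * j + 1 + 2 * t = 2 * (j + t) + 1 by ring, hodd, hodd, hh t (by omega)]
    · rw [show 2 * i + 1 + (2 * t + 1) = 2 * (i + t + 1) by ring,
        show 2 * j + 1 + (2 * t + 1) = 2 * (j + t + 1) by ring, heven, heven]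

theorem complexity_add_ncard_inter_of_interleave [Finite α] (hφ : φ.Injective)
    (heven : ∀ i, g (2 * i) = c) (hodd : ∀ i, g (2 * i + 1) = φ (h i)) :
    complexity g L + (evenFactors g L ∩ oddFactors g L).ncard =
      complexity h (L / 2) + complexity h ((L + 1) / 2) := by
  have hfin := factors_finite g L
  rw [factors_eq_evenFactors_union_oddFactors] at hfin
  rw [complexity, factors_eq_evenFactors_union_oddFactors,
    Set.ncard_union_add_ncard_inter _ _ (hfin.subset Set.subset_union_left)
      (hfin.subset Set.subset_union_right),
    evenFactors, oddFactors,
    ncard_range_eq_of_eq_iff fun i j => factor_two_mul_eq_iff hφ heven hodd,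
    ncard_range_eq_of_eq_iff fun i j => factor_two_mul_add_one_eq_iff hφ heven hodd]
  rfl

theorem complexity_eq_of_interleave [Finite α] (hφ : φ.Injective)
    (heven : ∀ i, g (2 * i) = c) (hodd : ∀ i, g (2 * i + 1) = φ (h i))
    (hdisj : Disjoint (evenFactors g L) (oddFactors g L)) :
    complexity g L = complexity h (L / 2) + complexity h ((L + 1) / 2) := by
  rw [← complexity_add_ncard_inter_of_interleave hφ heven hodd, hdisj.inter_eq,
    Set.ncard_empty, add_zero]

end Interleave

instance : Fintype A := ⟨{A.a, A.x, A.y, A.z}, fun c => by cases c <;> simp⟩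

def rot : A → A
  | A.a => A.a
  | A.x => A.y
  | A.y => A.z
  | A.z => A.x

lemma rot_injective : Function.Injective rot := by decide

lemma rot_eq_x_iff {c : A} : rot c = A.x ↔ c = A.z := by
  cases c <;> decide

lemma tau_of_ne_a {c : A} (hc : c ≠ A.a) : tau c = [rot c] := by
  cases c <;> simp_all [tau, rot]

def xi (i : ℕ) : A := if i % 2 = 0 then A.x else rot (xi (i / 2))
decreasing_by omega

lemma xi_two_mul (i : ℕ) : xi (2 * i) = A.x := by
  rw [xi, if_pos (by omega)]

lemma xi_two_mul_add_one (i : ℕ) : xi (2 * i + 1) = rot (xi i) := by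
  rw [xi, if_neg (by omega), show (2 * i + 1) / 2 = i by omega]

lemma xi_ne_a (i : ℕ) : xi i ≠ A.a := by
  induction i using Nat.strong_induction_on with
  | _ i ih =>
    obtain ⟨j, rfl | rfl⟩ := Nat.even_or_odd' i
    · simp [xi_two_mul]
    · have := ih j (by omega)
      rw [xi_two_mul_add_one]
      cases h : xi j <;> simp_all [rot]

lemma not_xi_eq_z_and_xi_succ_eq_z (j : ℕ) : ¬ (xi j = A.z ∧ xi (j + 1) = A.z) := by
  obtain ⟨i, rfl | rfl⟩ := Nat.even_or_odd' j
  · simp [xi_two_mul]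
  · simp [show 2 * i + 1 + 1 = 2 * (i + 1) by ring, xi_two_mul]

def interlaceA (l : List A) : List A := A.a :: l.flatMap fun c => [c, A.a]

lemma interlaceA_cons (c : A) (l : List A) : interlaceA (c :: l) = A.a :: c :: interlaceA l := by
  simp [interlaceA]

lemma tauW_interlaceA (l : List A) (hl : ∀ c ∈ l, c ≠ A.a) :
    tauW (interlaceA l) = interlaceA (l.flatMap (fun c => [A.x, rot c]) ++ [A.x]) := by
  induction l with
  | nil => rfl
  | cons c l ih =>
    rw [List.forall_mem_cons] at hl
    rw [interlaceA_cons, tauW, List.flatMap_cons, List.flatMap_cons, ← tauW, ih hl.2,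
      tau_of_ne_a hl.1]
    simp [tau, interlaceA_cons]

lemma map_xi_range_two_mul_add_one (m : ℕ) :
    (List.range (2 * m + 1)).map xi =
      ((List.range m).map xi).flatMap (fun c => [A.x, rot c]) ++ [A.x] := by
  induction m with
  | zero => simp [xi_two_mul 0]
  | succ m ih =>
    rw [show 2 * (m + 1) + 1 = 2 * m + 1 + 1 + 1 by ring, List.range_succ, List.range_succ,
      List.map_append, List.map_append, ih, List.range_succ]
    simp [xi_two_mul, xi_two_mul_add_one, show 2 * m + 1 + 1 = 2 * (m + 1) by ring]

lemma pw_eq_interlaceA (n : ℕ) : pw n = interlaceA ((List.range (2 ^ n - 1)).map xi) := by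
  induction n with
  | zero => rfl
  | succ n ih =>
    have hlen : 2 ^ (n + 1) - 1 = 2 * (2 ^ n - 1) + 1 := by
      have := Nat.one_le_two_pow (n := n); rw [pow_succ]; omega
    rw [pw, ih, tauW_interlaceA _ (by simp [xi_ne_a]), hlen, map_xi_range_two_mul_add_one]

lemma getD_interlaceA_two_mul (l : List A) (i : ℕ) : (interlaceA l).getD (2 * i) A.a = A.a := by
  induction l generalizing i with
  | nil => cases i <;> rfl
  | cons c l ih =>
    cases i with
    | zero => rfl
    | succ i => rw [interlaceA_cons, show 2 * (i + 1) = 2 * i + 1 + 1 by ring]; exact ih i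

lemma getD_interlaceA_two_mul_add_one (l : List A) (i : ℕ) :
    (interlaceA l).getD (2 * i + 1) A.a = l.getD i A.a := by
  induction l generalizing i with
  | nil => cases i <;> rfl
  | cons c l ih =>
    cases i with
    | zero => rfl
    | succ i => rw [interlaceA_cons, show 2 * (i + 1) + 1 = 2 * i + 1 + 1 + 1 by ring]; exact ih i

lemma eta_two_mul (i : ℕ) : eta (2 * i) = A.a := by
  rw [eta, pw_eq_interlaceA, getD_interlaceA_two_mul]

lemma eta_two_mul_add_one (i : ℕ) : eta (2 * i + 1) = xi i := by
  have hi : i < 2 ^ (2 * i + 1 + 1) - 1 := by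
    have := Nat.lt_two_pow_self (n := 2 * i + 1 + 1); omega
  rw [eta, pw_eq_interlaceA, getD_interlaceA_two_mul_add_one, List.getD_eq_getElem _ _ (by simpa)]
  simp

lemma etaComplexity_eq_complexity (L : ℕ) : etaComplexity L = complexity eta L := by
  rw [etaComplexity, complexity]
  congr 1
  ext w
  constructor
  · rintro ⟨rfl, i, hi⟩
    exact ⟨i, hi.symm⟩
  · rintro ⟨i, rfl⟩
    exact ⟨by simp [factor], i, by simp [factor]⟩

lemma disjoint_evenFactors_oddFactors_xi {L : ℕ} (hL : 3 ≤ L) :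
    Disjoint (evenFactors xi L) (oddFactors xi L) := by
  rw [Set.disjoint_left]
  rintro _ ⟨i, rfl⟩ ⟨j, hj⟩
  have h0 := factor_eq_factor_iff.mp hj 0 (by omega)
  have h2 := factor_eq_factor_iff.mp hj 2 (by omega)
  rw [show 2 * j + 1 + 2 = 2 * (j + 1) + 1 by ring, show 2 * i + 2 = 2 * (i + 1) by ring] at h2
  simp only [add_zero, xi_two_mul_add_one, xi_two_mul] at h0 h2
  exact not_xi_eq_z_and_xi_succ_eq_z j ⟨rot_eq_x_iff.mp h0, rot_eq_x_iff.mp h2⟩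

lemma complexity_xi {L : ℕ} (hL : 3 ≤ L) :
    complexity xi L = complexity xi (L / 2) + complexity xi ((L + 1) / 2) :=
  complexity_eq_of_interleave rot_injective xi_two_mul xi_two_mul_add_one
    (disjoint_evenFactors_oddFactors_xi hL)

lemma complexity_eta {L : ℕ} (hL : 0 < L) :
    complexity eta L = complexity xi (L / 2) + complexity xi ((L + 1) / 2) :=
  complexity_eq_of_interleave (φ := id) Function.injective_id eta_two_mul eta_two_mul_add_one
    (disjoint_evenFactors_oddFactors_of_ne hL fun i j => by
      rw [eta_two_mul, eta_two_mul_add_one]; exact (xi_ne_a j).symm)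

lemma range_xi : Set.range xi = {A.x, A.y, A.z} := by
  ext c
  constructor
  · rintro ⟨i, rfl⟩
    have := xi_ne_a i
    cases h : xi i <;> simp_all
  · rintro (rfl | rfl | rfl)
    exacts [⟨0, by simp [xi]⟩, ⟨1, by simp [xi, rot]⟩, ⟨3, by simp [xi, rot]⟩]

lemma complexity_xi_one : complexity xi 1 = 3 := by
  rw [complexity_one, range_xi, Set.ncard_eq_three]
  exact ⟨_, _, _, by decide, by decide, by decide, rfl⟩

lemma evenFactors_inter_oddFactors_xi_two :
    evenFactors xi 2 ∩ oddFactors xi 2 = {[A.x, A.x]} := by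
  ext w
  constructor
  · rintro ⟨⟨i, rfl⟩, ⟨j, hj⟩⟩
    simp only [factor, List.range_succ, List.range_zero] at hj ⊢
    simp_all [show 2 * j + 1 + 1 = 2 * (j + 1) by ring, xi_two_mul, xi_two_mul_add_one]
  · rintro rfl
    refine ⟨⟨3, ?_⟩, ⟨3, ?_⟩⟩ <;>
      simp only [factor, List.range_succ, List.range_zero] <;> norm_num <;> simp [xi, rot]

lemma complexity_xi_two : complexity xi 2 = 5 := by
  have := complexity_add_ncard_inter_of_interleave (L := 2) rot_injective xi_two_mul
    xi_two_mul_add_one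
  rw [evenFactors_inter_oddFactors_xi_two, Set.ncard_singleton, complexity_xi_one] at this
  omega

lemma complexity_xi_two_pow_add (r j : ℕ) (hj : j ≤ 2 ^ (r + 1)) :
    complexity xi (2 ^ (r + 1) + j) =
      if j ≤ 2 ^ r then 5 * 2 ^ r + 3 * j else 6 * 2 ^ r + 2 * j := by
  induction r generalizing j with
  | zero =>
    have h3 := complexity_xi (L := 3) le_rfl
    have h4 := complexity_xi (L := 4) (by norm_num)
    norm_num [complexity_xi_one, complexity_xi_two] at h3 h4
    interval_cases j <;> simp [complexity_xi_two, h3, h4]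
  | succ r ih =>
    have hpow : 2 ^ (r + 1) = 2 * 2 ^ r := by ring
    have hpow' : 2 ^ (r + 1 + 1) = 2 * 2 ^ (r + 1) := by ring
    have := Nat.one_le_two_pow (n := r)
    rw [complexity_xi (by omega), show (2 ^ (r + 1 + 1) + j) / 2 = 2 ^ (r + 1) + j / 2 by omega,
      show (2 ^ (r + 1 + 1) + j + 1) / 2 = 2 ^ (r + 1) + (j + 1) / 2 by omega,
      ih _ (by omega), ih _ (by omega)]
    split_ifs <;> omega

lemma etaComplexity_two_pow_add (r k : ℕ) (hk : k ≤ 2 ^ (r + 2)) :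
    etaComplexity (2 ^ (r + 2) + k) =
      if k ≤ 2 ^ (r + 1) then 10 * 2 ^ r + 3 * k else 12 * 2 ^ r + 2 * k := by
  have hpow : 2 ^ (r + 1) = 2 * 2 ^ r := by ring
  have hpow' : 2 ^ (r + 2) = 2 * 2 ^ (r + 1) := by ring
  rw [etaComplexity_eq_complexity, complexity_eta (by positivity),
    show (2 ^ (r + 2) + k) / 2 = 2 ^ (r + 1) + k / 2 by omega,
    show (2 ^ (r + 2) + k + 1) / 2 = 2 ^ (r + 1) + (k + 1) / 2 by omega,
    complexity_xi_two_pow_add _ _ (by omega), complexity_xi_two_pow_add _ _ (by omega)]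
  split_ifs <;> omega

/-- **Complexity theorem**: `ℂ(1) = 4`, `ℂ(2) = 6`, `ℂ(3) = 8`, and for `n ≥ 2`,
`0 ≤ k < 2ⁿ`, `L = 2ⁿ + k`:  `ℂ(L) = 2^(n+1) + 2^(n-1) + 3k` if `k < 2^(n-1)`, and
`ℂ(L) = 2^(n+1) + 2^n + 2k` if `2^(n-1) ≤ k < 2^n`. In particular the difference
`ℂ(L+1) - ℂ(L)` is `3` in the first range and `2` in the second. -/
theorem complexity_theorem :
    etaComplexity 1 = 4 ∧ etaComplexity 2 = 6 ∧ etaComplexity 3 = 8 ∧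
    (∀ n k : ℕ, 2 ≤ n → k < 2 ^ n →
      (k < 2 ^ (n - 1) →
        etaComplexity (2 ^ n + k) = 2 ^ (n + 1) + 2 ^ (n - 1) + 3 * k ∧
        etaComplexity (2 ^ n + k + 1) - etaComplexity (2 ^ n + k) = 3) ∧
      (2 ^ (n - 1) ≤ k →
        etaComplexity (2 ^ n + k) = 2 ^ (n + 1) + 2 ^ n + 2 * k ∧
        etaComplexity (2 ^ n + k + 1) - etaComplexity (2 ^ n + k) = 2)) := by
  refine ⟨?_, ?_, ?_, fun n k hn hk => ?_⟩
  · rw [etaComplexity_eq_complexity, complexity_eta (by norm_num)]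
    norm_num [complexity_zero, complexity_xi_one]
  · rw [etaComplexity_eq_complexity, complexity_eta (by norm_num)]
    norm_num [complexity_xi_one]
  · rw [etaComplexity_eq_complexity, complexity_eta (by norm_num)]
    norm_num [complexity_xi_one, complexity_xi_two]
  obtain ⟨r, rfl⟩ : ∃ r, n = r + 2 := ⟨n - 2, by omega⟩
  have hk0 := etaComplexity_two_pow_add r k (by omega)
  have hk1 := etaComplexity_two_pow_add r (k + 1) (by omega)
  rw [← add_assoc] at hk1
  have hpow : 2 ^ (r + 1) = 2 * 2 ^ r := by ring
  have hpow' : 2 ^ (r + 2) = 2 * 2 ^ (r + 1) := by ring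
  have hpow'' : 2 ^ (r + 2 + 1) = 2 * 2 ^ (r + 2) := by ring
  rw [show r + 2 - 1 = r + 1 by omega]
  refine ⟨fun hlo => ⟨?_, ?_⟩, fun hhi => ⟨?_, ?_⟩⟩ <;> split_ifs at hk0 hk1 <;> omega
end

section
/- The fixed point η is automatic: for every n ∈ ℕ, η(n) equals the label of the state reached in the automaton 𝒜 by starting at q₀ and reading the binary expansion of n from the most significant digit to the least significant digit (for n = 0 one reads the single digit 0; for n ≥ 1 the leading digit is 1). -/
/-- The transition function of the automaton `𝒜`: the states `q₀,q₁,q₂,q₃` are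
identified with their labels `a,x,y,z`. Reading `0` from any state leads to `q₀`;
reading `1` gives `q₀ ↦ q₁ ↦ q₂ ↦ q₃ ↦ q₁`. -/
def delta : A → Bool → A
  | _, false => A.a
  | A.a, true => A.x
  | A.x, true => A.y
  | A.y, true => A.z
  | A.z, true => A.x

/-!
Write `γ n` for the output of `𝒜` on the binary expansion of `n`. Since `γ (2k) = a`,
`γ (2k+1) = δ (γ k) 1` and `τ` acts on `{x, y, z}` exactly as reading a `1` does, `τ` sends
`γ (2k)` to `γ (4k) γ (4k+1) γ (4k+2)` and `γ (2k+1)` to `γ (4k+3)`. Hence `τ` maps the prefix of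
`γ` of length `2j+1` onto the prefix of length `4j+3`, so every `τⁿ(a)` is a prefix of `γ`.
-/

def readBinary {σ : Type*} (δ : σ → Bool → σ) (q : σ) (n : ℕ) : σ :=
  (Nat.bits n).reverse.foldl δ q

section readBinary

variable {σ : Type*} (δ : σ → Bool → σ) (q : σ)

lemma readBinary_two_mul_add_one (n : ℕ) :
    readBinary δ q (2 * n + 1) = δ (readBinary δ q n) true := by
  simp [readBinary, Nat.bit1_bits, List.foldl_append]

lemma readBinary_two_mul {n : ℕ} (hn : n ≠ 0) :
    readBinary δ q (2 * n) = δ (readBinary δ q n) false := by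
  simp [readBinary, Nat.bit0_bits _ hn, List.foldl_append]

end readBinary

local notation "γ" => readBinary delta A.a

lemma delta_false (c : A) : delta c false = A.a := by
  cases c <;> rfl

lemma tau_delta_true (c : A) : tau (delta c true) = [delta (delta c true) true] := by
  cases c <;> rfl

lemma gamma_two_mul (k : ℕ) : γ (2 * k) = A.a := by
  rcases eq_or_ne k 0 with rfl | hk
  · rfl
  · rw [readBinary_two_mul _ _ hk, delta_false]

lemma gamma_two_mul_add_one (k : ℕ) : γ (2 * k + 1) = delta (γ k) true :=
  readBinary_two_mul_add_one _ _ k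

lemma tau_gamma_two_mul (k : ℕ) :
    tau (γ (2 * k)) = [γ (4 * k), γ (4 * k + 1), γ (4 * k + 2)] := by
  have h₁ : 4 * k + 1 = 2 * (2 * k) + 1 := by ring
  have h₂ : 4 * k + 2 = 2 * (2 * k + 1) := by ring
  rw [h₁, h₂, show 4 * k = 2 * (2 * k) by ring, gamma_two_mul_add_one, gamma_two_mul,
    gamma_two_mul, gamma_two_mul]
  rfl

lemma tau_gamma_two_mul_add_one (k : ℕ) : tau (γ (2 * k + 1)) = [γ (4 * k + 3)] := by
  rw [show 4 * k + 3 = 2 * (2 * k + 1) + 1 by ring, gamma_two_mul_add_one (2 * k + 1),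
    gamma_two_mul_add_one k, tau_delta_true]

lemma tauW_map_gamma_range (j : ℕ) :
    tauW ((List.range (2 * j + 1)).map γ) = (List.range (4 * j + 3)).map γ := by
  induction j with
  | zero => rfl
  | succ j ih =>
    have heven := tau_gamma_two_mul (j + 1)
    rw [show 2 * (j + 1) = 2 * j + 1 + 1 by ring, show 4 * (j + 1) = 4 * j + 3 + 1 by ring]
      at heven
    rw [show 2 * (j + 1) + 1 = 2 * j + 1 + 2 by ring, List.range_add, List.map_append, tauW,
      List.flatMap_append, ← tauW, ih, show 4 * (j + 1) + 3 = 4 * j + 3 + 4 by ring,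
      List.range_add, List.map_append]
    simp [List.range_succ, tau_gamma_two_mul_add_one, heven]

lemma pw_eq_map_gamma_range (m : ℕ) : pw m = (List.range (2 ^ (m + 1) - 1)).map γ := by
  induction m with
  | zero => rfl
  | succ m ih =>
    have hpos : 1 ≤ 2 ^ m := Nat.one_le_two_pow
    have h₁ : 2 ^ (m + 1) - 1 = 2 * (2 ^ m - 1) + 1 := by rw [pow_succ]; omega
    have h₂ : 2 ^ (m + 1 + 1) - 1 = 4 * (2 ^ m - 1) + 3 := by rw [pow_succ, pow_succ]; omega
    rw [pw, ih, h₁, h₂, tauW_map_gamma_range]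

/-- **`η` is automatic**: `η(n)` is the label of the state reached from `q₀` by
reading the binary expansion of `n` from the most significant digit to the least
significant one (`Nat.bits n` lists the digits least-significant-first; for
`n = 0` reading the single digit `0` from `q₀` also yields `q₀`, whose label is `a`). -/
theorem eta_is_automatic : ∀ n : ℕ, eta n = (Nat.bits n).reverse.foldl delta A.a := by
  intro n
  have hn : n < 2 ^ (n + 1 + 1) - 1 := by
    have := Nat.lt_two_pow_self (n := n + 1)
    rw [pow_succ 2 (n + 1)]
    omega
  rw [eta, pw_eq_map_gamma_range, List.getD_eq_getElem _ _ (by simpa using hn)]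
  simp [readBinary]
end

section
/- Let ζ be the substitution on A given by ζ(a) = ax, ζ(x) = ay, ζ(y) = az, ζ(z) = ax, extended to words by concatenation. Then for every n ≥ 1, ζⁿ(a) = τⁿ⁻¹(a)·τⁿ⁻¹(x) (concatenation of the word p⁽ⁿ⁻¹⁾ with the single letter τⁿ⁻¹(x) ∈ {x,y,z}). In particular, ζⁿ(a) is a prefix of η for every n ≥ 1, so the primitive substitution ζ has the same fixed point η as τ. -/
/-- The substitution `ζ : a ↦ ax, x ↦ ay, y ↦ az, z ↦ ax`. -/
def zeta : A → List A
  | A.a => [A.a, A.x]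
  | A.x => [A.a, A.y]
  | A.y => [A.a, A.z]
  | A.z => [A.a, A.x]

/-- `ζ` extended to finite words by concatenation. -/
def zetaW (w : List A) : List A := w.flatMap zeta

/-- `ζⁿ(a)`. -/
def zetaIter (n : ℕ) : List A := zetaW^[n] [A.a]

/-- The single letter `τ^m(x) ∈ {x,y,z}` (cycling `x → y → z → x`). -/
def tauX (m : ℕ) : A :=
  match m % 3 with
  | 0 => A.x
  | 1 => A.y
  | _ => A.z

lemma tauW_append (u v : List A) : tauW (u ++ v) = tauW u ++ tauW v :=
  List.flatMap_append ..

lemma zetaW_append (u v : List A) : zetaW (u ++ v) = zetaW u ++ zetaW v :=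
  List.flatMap_append ..

lemma tau_tauX (n : ℕ) : tau (tauX n) = [tauX (n + 1)] := by
  unfold tauX
  rcases (by omega : n % 3 = 0 ∨ n % 3 = 1 ∨ n % 3 = 2) with h | h | h <;>
    simp [h, Nat.add_mod, tau]

lemma zeta_tauX (n : ℕ) : zeta (tauX n) = [A.a, tauX (n + 1)] := by
  unfold tauX
  rcases (by omega : n % 3 = 0 ∨ n % 3 = 1 ∨ n % 3 = 2) with h | h | h <;>
    simp [h, Nat.add_mod, zeta]

lemma pw_succ (n : ℕ) : pw (n + 1) = pw n ++ tauX n :: pw n := by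
  induction n with
  | zero => rfl
  | succ n ih =>
    change tauW (pw (n + 1)) = tauW (pw n) ++ tauX (n + 1) :: tauW (pw n)
    rw [ih, tauW_append]
    simp [tauW, tau_tauX]

lemma zetaW_pw_append_a (n : ℕ) : zetaW (pw n) ++ [A.a] = pw (n + 1) := by
  induction n with
  | zero => rfl
  | succ n ih =>
    rw [pw_succ n, zetaW_append, pw_succ (n + 1), ← ih]
    simp [zetaW, zeta_tauX]

lemma zetaIter_succ (n : ℕ) : zetaIter (n + 1) = pw n ++ [tauX n] := by
  induction n with
  | zero => rfl
  | succ n ih =>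
    rw [zetaIter, Function.iterate_succ_apply', ← zetaIter, ih, zetaW_append,
      ← zetaW_pw_append_a n]
    simp [zetaW, zeta_tauX]

lemma pw_prefix_pw {m n : ℕ} (h : m ≤ n) : pw m <+: pw n := by
  induction n, h using Nat.le_induction with
  | base => exact List.prefix_refl _
  | succ n _ ih => exact ih.trans ⟨_, (pw_succ n).symm⟩

lemma lt_length_pw (n : ℕ) : n < (pw n).length := by
  induction n with
  | zero => simp [pw]
  | succ n ih =>
    rw [pw_succ]
    simp only [List.length_append, List.length_cons]
    omega

lemma eta_eq_getElem_pw {N k : ℕ} (h : k < (pw N).length) : eta k = (pw N)[k] := by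
  have hk : k < (pw (k + 1)).length := (Nat.lt_succ_self k).trans (lt_length_pw _)
  rw [eta, List.getD_eq_getElem _ _ hk]
  rcases le_total N (k + 1) with hN | hN
  · exact ((pw_prefix_pw hN).getElem h).symm
  · exact (pw_prefix_pw hN).getElem hk

lemma eq_map_eta_of_prefix_pw {w : List A} {N : ℕ} (hw : w <+: pw N) :
    w = (List.range w.length).map eta := by
  refine List.ext_getElem (by simp) fun k hk _ => ?_
  rw [List.getElem_map, List.getElem_range, eta_eq_getElem_pw (hk.trans_le hw.length_le)]
  exact hw.getElem hk

/-- For every `n ≥ 1`, `ζⁿ(a) = τ^(n-1)(a) · τ^(n-1)(x) = p⁽ⁿ⁻¹⁾ · τ^(n-1)(x)`;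
in particular `ζⁿ(a)` is a prefix of `η`, so the primitive substitution `ζ` has
the same fixed point `η` as `τ`. -/
theorem zeta_iterates (n : ℕ) (hn : 1 ≤ n) :
    zetaIter n = pw (n - 1) ++ [tauX (n - 1)] ∧
    zetaIter n = (List.range (zetaIter n).length).map eta := by
  obtain ⟨m, rfl⟩ := Nat.exists_eq_add_of_le' hn
  rw [Nat.add_sub_cancel, zetaIter_succ]
  exact ⟨rfl, eq_map_eta_of_prefix_pw (N := m + 1) ⟨pw m, by simp [pw_succ]⟩⟩
end

section
/- (Gordon Lemma.) Let f, g : ℤ → ℝ be bounded sequences with f(n) ≠ 0 for every n ∈ ℤ. Suppose there exists a sequence of positive integers L_k → ∞ such that for every k and every n ∈ {1, …, L_k} one has f(n) = f(n − L_k) = f(n + L_k) and g(n) = g(n − L_k) = g(n + L_k). Then for every E ∈ ℝ, every function u : ℤ → ℂ satisfying f(n)u(n+1) + f(n−1)u(n−1) + g(n)u(n) = E·u(n) for all n ∈ ℤ and ∑_{n∈ℤ} |u(n)|² < ∞ vanishes identically. (Equivalently, the self-adjoint operator H on ℓ²(ℤ) acting by (Hφ)(n) = f(n)φ(n+1) +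 f(n−1)φ(n−1) + g(n)φ(n) has no eigenvalues.) -/
/-!
Write `Φ(n) = (u(n+1), u(n))`, so that `Φ(n) = A(n) Φ(n-1)` for the transfer matrices `A(n)`.
Over a window of length `ℓ` the monodromy `T = A(ℓ) ⋯ A(1)` has determinant `f(0)/f(ℓ) = 1`, so
by Cayley–Hamilton `Φ(2ℓ) + Φ(0) = tr T · Φ(ℓ)`; the monodromy over `(1-ℓ, 1]` is conjugate to `T`
and gives `Φ(1+ℓ) + Φ(1-ℓ) = tr T · Φ(1)`. If `|tr T| ≤ 1` the first identity bounds `Φ(0)`, and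
otherwise the second bounds `Φ(1)`, by values of `Φ` at distance about `ℓ` from the origin. These
tend to zero as `ℓ → ∞` because `u` is square summable, so `Φ(0) = 0` or `Φ(1) = 0`; two
consecutive zeros of a solution force `u = 0` since `f` does not vanish.
-/

open Filter Topology Matrix

section TransferProd

variable {m R : Type*} [Fintype m] [DecidableEq m] [CommRing R]

def transferProd (A : ℤ → Matrix m m R) (a : ℤ) : ℕ → Matrix m m R
  | 0 => 1
  | j + 1 => A (a + j + 1) * transferProd A a j

variable {A : ℤ → Matrix m m R}

theorem transferProd_mulVec {Φ : ℤ → m → R} (hΦ : ∀ n, A (n + 1) *ᵥ Φ n = Φ (n + 1))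
    (a : ℤ) (j : ℕ) : transferProd A a j *ᵥ Φ a = Φ (a + j) := by
  induction j with
  | zero => simp [transferProd]
  | succ j ih =>
    rw [transferProd, ← mulVec_mulVec, ih, hΦ]
    push_cast
    ring_nf

theorem transferProd_congr {a b : ℤ} {j : ℕ} (h : ∀ i < j, A (a + i + 1) = A (b + i + 1)) :
    transferProd A a j = transferProd A b j := by
  induction j with
  | zero => rfl
  | succ j ih =>
    rw [transferProd, transferProd, h j j.lt_succ_self,
      ih fun i hi => h i (hi.trans j.lt_succ_self)]

theorem transferProd_succ' (a : ℤ) (j : ℕ) :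
    transferProd A a (j + 1) = transferProd A (a + 1) j * A (a + 1) := by
  induction j with
  | zero => simp [transferProd]
  | succ j ih =>
    rw [transferProd, ih, transferProd, ← Matrix.mul_assoc]
    push_cast
    ring_nf

end TransferProd

theorem Matrix.mulVec_mulVec_add_eq_trace_smul {R : Type*} [CommRing R]
    (M : Matrix (Fin 2) (Fin 2) R) (hM : M.det = 1) (v : Fin 2 → R) :
    M *ᵥ (M *ᵥ v) + v = M.trace • (M *ᵥ v) := by
  rw [det_fin_two] at hM
  ext i
  fin_cases i <;>
    simp only [mulVec_fin_two, trace_fin_two, Pi.add_apply, Pi.smul_apply, smul_eq_mul,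
      Fin.zero_eta, Fin.mk_one, cons_val_zero, cons_val_one, cons_val_fin_one]
  · linear_combination (-v 0) * hM
  · linear_combination (-v 1) * hM

theorem min_norm_le_of_add_eq_smul {𝕜 E : Type*} [NormedField 𝕜] [SeminormedAddCommGroup E]
    [NormedSpace 𝕜 E] {t : 𝕜} {x y z x' y' z' : E} (h : z + x = t • y) (h' : z' + x' = t • y') :
    min ‖x‖ ‖y'‖ ≤ ‖y‖ + ‖z‖ + (‖x'‖ + ‖z'‖) := by
  rcases le_total ‖t‖ 1 with ht | ht
  · have hx : ‖x‖ ≤ ‖y‖ + ‖z‖ :=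
      calc ‖x‖ = ‖t • y - z‖ := by rw [← h, add_sub_cancel_left]
        _ ≤ ‖t‖ * ‖y‖ + ‖z‖ := (norm_sub_le _ _).trans_eq (by rw [norm_smul])
        _ ≤ ‖y‖ + ‖z‖ := by gcongr; exact mul_le_of_le_one_left (norm_nonneg _) ht
    exact (min_le_left _ _).trans (le_add_of_le_of_nonneg hx (by positivity))
  · have hy' : ‖y'‖ ≤ ‖x'‖ + ‖z'‖ :=
      calc ‖y'‖ ≤ ‖t‖ * ‖y'‖ := le_mul_of_one_le_left (norm_nonneg _) ht
        _ = ‖z' + x'‖ := by rw [h', norm_smul]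
        _ ≤ ‖x'‖ + ‖z'‖ := (norm_add_le _ _).trans_eq (add_comm _ _)
    exact (min_le_right _ _).trans (le_add_of_nonneg_of_le (by positivity) hy')

section Jacobi

variable {𝕜 : Type*} [Field 𝕜] {f g u : ℤ → 𝕜} {E : 𝕜}

def IsJacobiSolution (f g : ℤ → 𝕜) (E : 𝕜) (u : ℤ → 𝕜) : Prop :=
  ∀ n, f n * u (n + 1) + f (n - 1) * u (n - 1) + g n * u n = E * u n

def jacobiTransfer (f g : ℤ → 𝕜) (E : 𝕜) (n : ℤ) : Matrix (Fin 2) (Fin 2) 𝕜 :=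
  !![(E - g n) / f n, -f (n - 1) / f n; 1, 0]

def jacobiState (u : ℤ → 𝕜) (n : ℤ) : Fin 2 → 𝕜 :=
  ![u (n + 1), u n]

theorem IsJacobiSolution.jacobiTransfer_mulVec (hf : ∀ n, f n ≠ 0) (hu : IsJacobiSolution f g E u)
    (n : ℤ) : jacobiTransfer f g E (n + 1) *ᵥ jacobiState u n = jacobiState u (n + 1) := by
  have h := hu (n + 1)
  rw [add_sub_cancel_right] at h
  ext i
  fin_cases i
  · simp only [jacobiTransfer, jacobiState, mulVec_fin_two, add_sub_cancel_right, Fin.zero_eta,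
      cons_val_zero, cons_val_one, of_apply]
    field_simp [hf (n + 1)]
    linear_combination -h
  · simp [jacobiTransfer, jacobiState]

theorem det_transferProd_jacobiTransfer (hf : ∀ n, f n ≠ 0) (a : ℤ) (j : ℕ) :
    (transferProd (jacobiTransfer f g E) a j).det = f a / f (a + j) := by
  induction j with
  | zero => simp [transferProd, hf a]
  | succ j ih =>
    rw [transferProd, det_mul, ih, jacobiTransfer, det_fin_two_of, add_sub_cancel_right,
      Nat.cast_succ, ← add_assoc]
    field_simp [hf (a + j), hf (a + j + 1)]
    ring

theorem IsJacobiSolution.eq_zero_of_jacobiState_eq_zero (hf : ∀ n, f n ≠ 0)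
    (hu : IsJacobiSolution f g E u) {a : ℤ} (ha : jacobiState u a = 0) : u = 0 := by
  have hzero : ∀ n, jacobiState u n = 0 := by
    intro n
    induction n using Int.inductionOn' with
    | b => exact a
    | zero => exact ha
    | succ k _ hk => rw [← hu.jacobiTransfer_mulVec hf, hk, mulVec_zero]
    | pred k _ hk =>
      obtain ⟨hk₁, hk₀⟩ : u (k + 1) = 0 ∧ u k = 0 := by simpa [jacobiState] using hk
      have h := hu k
      rw [hk₁, hk₀, mul_zero, mul_zero, mul_zero, add_zero, zero_add] at h
      have hk' : u (k - 1) = 0 := (mul_eq_zero.1 h).resolve_left (hf (k - 1))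
      simp [jacobiState, hk₀, hk']
  funext n
  simpa [jacobiState] using congrFun (hzero n) 1

end Jacobi

section Repetition

variable {α : Type*} {f : ℤ → α} {ℓ : ℕ}

def RepeatsThrice (f : ℤ → α) (ℓ : ℕ) : Prop :=
  ∀ n : ℤ, 1 ≤ n → n ≤ ℓ → f (n - ℓ) = f n ∧ f (n + ℓ) = f n

theorem RepeatsThrice.comp {β : Type*} (φ : α → β) (h : RepeatsThrice f ℓ) :
    RepeatsThrice (φ ∘ f) ℓ := fun n h₁ h₂ => (h n h₁ h₂).imp (congrArg φ) (congrArg φ)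

theorem RepeatsThrice.add_eq (h : RepeatsThrice f ℓ) {n : ℤ} (h₀ : 0 ≤ n) (h₁ : n ≤ ℓ) :
    f (n + ℓ) = f n := by
  rcases h₀.eq_or_lt with rfl | hn
  · rcases Nat.eq_zero_or_pos ℓ with rfl | hℓ
    · simp
    · simpa using ((h ℓ (by exact_mod_cast hℓ) le_rfl).1).symm
  · exact (h n hn h₁).2

theorem RepeatsThrice.sub_eq (h : RepeatsThrice f ℓ) {n : ℤ} (h₀ : 1 ≤ n) (h₁ : n ≤ ℓ + 1) :
    f (n - ℓ) = f n := by
  rcases h₁.lt_or_eq with hn | rfl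
  · exact (h n h₀ (by omega)).1
  · rcases Nat.eq_zero_or_pos ℓ with rfl | hℓ
    · simp
    · simpa [add_comm] using ((h 1 le_rfl (by exact_mod_cast hℓ)).2).symm

end Repetition

section Window

variable {𝕜 : Type*} [Field 𝕜] {f g : ℤ → 𝕜} {E : 𝕜} {ℓ : ℕ}

theorem jacobiTransfer_add_period (hf : RepeatsThrice f ℓ) (hg : RepeatsThrice g ℓ) {n : ℤ}
    (h₀ : 1 ≤ n) (h₁ : n ≤ ℓ) : jacobiTransfer f g E (n + ℓ) = jacobiTransfer f g E n := by
  have hf' : f (n + ℓ - 1) = f (n - 1) := by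
    rw [← sub_add_eq_add_sub]
    exact hf.add_eq (by omega) (by omega)
  rw [jacobiTransfer, jacobiTransfer, hf.add_eq (by omega) h₁, hg.add_eq (by omega) h₁, hf']

theorem jacobiTransfer_sub_period (hf : RepeatsThrice f ℓ) (hg : RepeatsThrice g ℓ) {n : ℤ}
    (h₀ : 2 ≤ n) (h₁ : n ≤ ℓ + 1) : jacobiTransfer f g E (n - ℓ) = jacobiTransfer f g E n := by
  have hf' : f (n - ℓ - 1) = f (n - 1) := by
    rw [sub_right_comm]
    exact hf.sub_eq (by omega) (by omega)
  rw [jacobiTransfer, jacobiTransfer, hf.sub_eq (by omega) h₁, hg.sub_eq (by omega) h₁, hf']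

theorem transferProd_jacobiTransfer_add_period (hf : RepeatsThrice f ℓ) (hg : RepeatsThrice g ℓ) :
    transferProd (jacobiTransfer f g E) ℓ ℓ = transferProd (jacobiTransfer f g E) 0 ℓ :=
  transferProd_congr fun i hi => by
    rw [show (ℓ : ℤ) + i + 1 = i + 1 + ℓ by ring, zero_add,
      jacobiTransfer_add_period hf hg (by omega) (by omega)]

-- The windows do not determine `f (-ℓ)`, so the shift by `-ℓ` is applied to the monodromy over
-- `(1, ℓ + 1]` rather than to the one over `(0, ℓ]`.
theorem transferProd_jacobiTransfer_sub_period (hf : RepeatsThrice f ℓ) (hg : RepeatsThrice g ℓ) :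
    transferProd (jacobiTransfer f g E) (1 - ℓ) ℓ = transferProd (jacobiTransfer f g E) 1 ℓ :=
  transferProd_congr fun i hi => by
    rw [show 1 - (ℓ : ℤ) + i + 1 = i + 2 - ℓ by ring, show 1 + (i : ℤ) + 1 = i + 2 by ring,
      jacobiTransfer_sub_period hf hg (by omega) (by omega)]

theorem trace_transferProd_jacobiTransfer_one (hf : RepeatsThrice f ℓ) (hg : RepeatsThrice g ℓ)
    (hℓ : 0 < ℓ) :
    (transferProd (jacobiTransfer f g E) 1 ℓ).trace =
      (transferProd (jacobiTransfer f g E) 0 ℓ).trace := by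
  obtain ⟨j, rfl⟩ := Nat.exists_eq_add_of_lt hℓ
  have hA : jacobiTransfer f g E (1 + j + 1) = jacobiTransfer f g E 1 := by
    simpa [add_comm, add_left_comm] using
      jacobiTransfer_add_period (E := E) hf hg (n := 1) le_rfl (by omega)
  rw [zero_add, transferProd, hA, transferProd_succ', zero_add, trace_mul_comm]

end Window

section Normed

variable {𝕜 : Type*} [NormedField 𝕜] {f g u : ℤ → 𝕜} {E : 𝕜} {ℓ : ℕ}

theorem IsJacobiSolution.min_norm_jacobiState_le (hf0 : ∀ n, f n ≠ 0)
    (hu : IsJacobiSolution f g E u) (hf : RepeatsThrice f ℓ) (hg : RepeatsThrice g ℓ)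
    (hℓ : 0 < ℓ) :
    min ‖jacobiState u 0‖ ‖jacobiState u 1‖ ≤
      ‖jacobiState u ℓ‖ + ‖jacobiState u (ℓ + ℓ)‖ +
        (‖jacobiState u (1 - ℓ)‖ + ‖jacobiState u (1 + ℓ)‖) := by
  have hstep := hu.jacobiTransfer_mulVec hf0
  set T₀ := transferProd (jacobiTransfer f g E) 0 ℓ with hT₀
  set T₁ := transferProd (jacobiTransfer f g E) 1 ℓ with hT₁
  have hdet₀ : T₀.det = 1 := by
    rw [det_transferProd_jacobiTransfer hf0, hf.add_eq le_rfl (Nat.cast_nonneg ℓ),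
      div_self (hf0 0)]
  have hdet₁ : T₁.det = 1 := by
    rw [det_transferProd_jacobiTransfer hf0, hf.add_eq zero_le_one (by exact_mod_cast hℓ),
      div_self (hf0 1)]
  have h₀ : T₀ *ᵥ jacobiState u 0 = jacobiState u ℓ := by
    rw [transferProd_mulVec hstep, zero_add]
  have h₀' : T₀ *ᵥ jacobiState u ℓ = jacobiState u (ℓ + ℓ) := by
    rw [hT₀, ← transferProd_jacobiTransfer_add_period hf hg, transferProd_mulVec hstep]
  have h₁ : T₁ *ᵥ jacobiState u (1 - ℓ) = jacobiState u 1 := by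
    rw [hT₁, ← transferProd_jacobiTransfer_sub_period hf hg, transferProd_mulVec hstep,
      sub_add_cancel]
  have h₁' : T₁ *ᵥ jacobiState u 1 = jacobiState u (1 + ℓ) := transferProd_mulVec hstep 1 ℓ
  refine min_norm_le_of_add_eq_smul (t := T₀.trace) ?_ ?_
  · rw [← h₀', ← h₀, T₀.mulVec_mulVec_add_eq_trace_smul hdet₀]
  · rw [← h₁', ← h₁, T₁.mulVec_mulVec_add_eq_trace_smul hdet₁,
      trace_transferProd_jacobiTransfer_one hf hg hℓ]

theorem tendsto_jacobiState_cofinite (hu : Tendsto u cofinite (𝓝 0)) :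
    Tendsto (jacobiState u) cofinite (𝓝 0) := by
  refine tendsto_pi_nhds.2 (Fin.forall_fin_two.2 ⟨?_, hu⟩)
  exact hu.comp (add_left_injective 1).tendsto_cofinite

theorem IsJacobiSolution.eq_zero_of_tendsto_cofinite (hf0 : ∀ n, f n ≠ 0)
    (hu : IsJacobiSolution f g E u) {L : ℕ → ℕ} (hL : Tendsto L atTop atTop)
    (hf : ∀ k, RepeatsThrice f (L k)) (hg : ∀ k, RepeatsThrice g (L k))
    (hdecay : Tendsto u cofinite (𝓝 0)) : u = 0 := by
  have hΦ := tendsto_norm_zero.comp (tendsto_jacobiState_cofinite hdecay)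
  have hℓ : Tendsto (fun k => (L k : ℤ)) atTop atTop := tendsto_natCast_atTop_atTop.comp hL
  have hfar : ∀ c : ℕ → ℤ, Tendsto c atTop cofinite →
      Tendsto (fun k => ‖jacobiState u (c k)‖) atTop (𝓝 0) := fun c hc => hΦ.comp hc
  have hℓ' := hℓ.mono_right atTop_le_cofinite
  have hlim : Tendsto (fun k => ‖jacobiState u (L k)‖ + ‖jacobiState u (L k + L k)‖ +
      (‖jacobiState u (1 - L k)‖ + ‖jacobiState u (1 + L k)‖)) atTop (𝓝 0) := by
    simpa only [add_zero, Function.comp_def] using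
      ((hfar _ hℓ').add (hfar _ ((hℓ.atTop_add_atTop hℓ).mono_right atTop_le_cofinite))).add
        ((hfar _ (sub_right_injective.tendsto_cofinite.comp hℓ')).add
          (hfar _ ((add_right_injective 1).tendsto_cofinite.comp hℓ')))
  have hmin : min ‖jacobiState u 0‖ ‖jacobiState u 1‖ ≤ 0 :=
    ge_of_tendsto hlim <| (hL.eventually_gt_atTop 0).mono fun k hk =>
      hu.min_norm_jacobiState_le hf0 (hf k) (hg k) hk
  rcases min_le_iff.1 hmin with h | h <;>
    exact hu.eq_zero_of_jacobiState_eq_zero hf0 (norm_le_zero_iff.1 h)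

end Normed

theorem gordon_lemma_general (f g : ℤ → ℝ)
    (hf_ne : ∀ n : ℤ, f n ≠ 0)
    (L : ℕ → ℕ)
    (hL_tendsto : Filter.Tendsto L Filter.atTop Filter.atTop)
    (hper : ∀ k : ℕ, ∀ n : ℤ, 1 ≤ n → n ≤ (L k : ℤ) →
      f n = f (n - L k) ∧ f n = f (n + L k) ∧
      g n = g (n - L k) ∧ g n = g (n + L k))
    (E : ℝ) (u : ℤ → ℂ)
    (hu : ∀ n : ℤ,
      (f n : ℂ) * u (n + 1) + (f (n - 1) : ℂ) * u (n - 1) + (g n : ℂ) * u n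
        = (E : ℂ) * u n)
    (hl2 : Summable fun n : ℤ => ‖u n‖ ^ 2) :
    u = 0 := by
  have hdecay : Tendsto u cofinite (𝓝 0) := by
    rw [tendsto_zero_iff_norm_tendsto_zero]
    simpa using hl2.tendsto_cofinite_zero.sqrt
  have hf : ∀ k, RepeatsThrice f (L k) := fun k n h₁ h₂ =>
    ⟨(hper k n h₁ h₂).1.symm, (hper k n h₁ h₂).2.1.symm⟩
  have hg : ∀ k, RepeatsThrice g (L k) := fun k n h₁ h₂ =>
    ⟨(hper k n h₁ h₂).2.2.1.symm, (hper k n h₁ h₂).2.2.2.symm⟩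
  exact IsJacobiSolution.eq_zero_of_tendsto_cofinite (E := (E : ℂ))
    (fun n => Complex.ofReal_ne_zero.2 (hf_ne n)) hu hL_tendsto
    (fun k => (hf k).comp Complex.ofReal) (fun k => (hg k).comp Complex.ofReal) hdecay

/-- **Gordon Lemma.** Let `f, g : ℤ → ℝ` be bounded with `f` nowhere zero, and
suppose there are positive integers `L_k → ∞` such that `f` and `g` repeat
three times over the windows `{1,…,L_k}`: `f(n) = f(n - L_k) = f(n + L_k)` and
`g(n) = g(n - L_k) = g(n + L_k)` for `1 ≤ n ≤ L_k`. Then for every `E ∈ ℝ`,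
every square-summable solution `u : ℤ → ℂ` of
`f(n)u(n+1) + f(n-1)u(n-1) + g(n)u(n) = E·u(n)` vanishes identically; i.e. the
operator `(Hφ)(n) = f(n)φ(n+1) + f(n-1)φ(n-1) + g(n)φ(n)` on `ℓ²(ℤ)` has no
eigenvalues. -/
theorem gordon_lemma (f g : ℤ → ℝ)
    (hf_bdd : ∃ M : ℝ, ∀ n : ℤ, |f n| ≤ M)
    (hg_bdd : ∃ M : ℝ, ∀ n : ℤ, |g n| ≤ M)
    (hf_ne : ∀ n : ℤ, f n ≠ 0)
    (L : ℕ → ℕ) (hL_pos : ∀ k, 0 < L k)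
    (hL_tendsto : Filter.Tendsto L Filter.atTop Filter.atTop)
    (hper : ∀ k : ℕ, ∀ n : ℤ, 1 ≤ n → n ≤ (L k : ℤ) →
      f n = f (n - L k) ∧ f n = f (n + L k) ∧
      g n = g (n - L k) ∧ g n = g (n + L k))
    (E : ℝ) (u : ℤ → ℂ)
    (hu : ∀ n : ℤ,
      (f n : ℂ) * u (n + 1) + (f (n - 1) : ℂ) * u (n - 1) + (g n : ℂ) * u n
        = (E : ℂ) * u n)
    (hl2 : Summable fun n : ℤ => ‖u n‖ ^ 2) :
    u = 0 :=
  gordon_lemma_general f g hf_ne L hL_tendsto hper E u hu hl2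
end
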